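/- arXiv:2311.06821 — 3 statements merged into one kernel-verified Lean document; each statement's English description precedes it below -/
import Mathlib

section
/- Let n ≥ 1 and m ≥ 1. Let F, G₁,…,G_n ∈ ℝ⟦x,y₁,…,y_n⟧ be formal power series with zero constant term. Let Γ_y = (Γ_{y₁},…,Γ_{y_n}) ∈ (xℝ⟦x⟧)^n with ord_x Γ_{y_i} ≥ m for every i, and suppose that G_i∘Γ = (F∘Γ)·(d/dx)Γ_{y_i} in ℝ⟦x⟧ for every i, where H∘Γ denotes the substitution of (x, Γ_{y₁}(x),…,Γ_{y_n}(x)) into H. Then ord_x G_i(x,0,…,0) ≥ m for every i. -/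
open scoped Topology
open Filter Set

noncomputable section

/-! ### Θ embedding and block matrices -/

/-- `Θ : ℂ → M₂(ℝ)`, `a+bi ↦ aI₂ + bJ₂`. -/
def theta (z : ℂ) : Matrix (Fin 2) (Fin 2) ℝ :=
  Matrix.of ![![z.re, -z.im], ![z.im, z.re]]

/-- Block index type `(Fin n₁ × Fin 2) ⊕ Fin n₂` for matrices `Θ(·) ⊕ ·`. -/
abbrev BIdx (n₁ n₂ : ℕ) := (Fin n₁ × Fin 2) ⊕ Fin n₂

/-- Real part of a complex polynomial, as a real polynomial. -/
def reP (P : Polynomial ℂ) : Polynomial ℝ :=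
  ∑ k ∈ Finset.range (P.natDegree + 1), Polynomial.C ((P.coeff k).re) * Polynomial.X ^ k

/-- Imaginary part of a complex polynomial, as a real polynomial. -/
def imP (P : Polynomial ℂ) : Polynomial ℝ :=
  ∑ k ∈ Finset.range (P.natDegree + 1), Polynomial.C ((P.coeff k).im) * Polynomial.X ^ k

/-- Order (valuation at 0) of a real polynomial, `⊤` for the zero polynomial. -/
def ordP (P : Polynomial ℝ) : ℕ∞ :=
  if P = 0 then ⊤ else (P.rootMultiplicity 0 : ℕ∞)

/-- `P > 0`: `P` is eventually positive as `x → 0⁺`. -/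
def evPos (P : Polynomial ℝ) : Prop :=
  ∀ᶠ x in 𝓝[>] (0 : ℝ), 0 < P.eval x

/-- `Θ` of a complex polynomial, as a 2×2 matrix of real polynomials. -/
def thetaPoly (P : Polynomial ℂ) : Matrix (Fin 2) (Fin 2) (Polynomial ℝ) :=
  Matrix.of ![![reP P, -imP P], ![imP P, reP P]]

/-- The exponential part `D = Θ(diag c) ⊕ diag d` as a matrix of real polynomials. -/
def expPartPoly {n₁ n₂ : ℕ} (c : Fin n₁ → Polynomial ℂ) (d : Fin n₂ → Polynomial ℝ) :
    Matrix (BIdx n₁ n₂) (BIdx n₁ n₂) (Polynomial ℝ) :=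
  Matrix.of fun i j =>
    match i, j with
    | Sum.inl (j₁, a), Sum.inl (k₁, b) => if j₁ = k₁ then thetaPoly (c j₁) a b else 0
    | Sum.inr j₁, Sum.inr k₁ => if j₁ = k₁ then d j₁ else 0
    | _, _ => 0

/-- The exponential part evaluated at `x : ℝ`. -/
def expPart {n₁ n₂ : ℕ} (c : Fin n₁ → Polynomial ℂ) (d : Fin n₂ → Polynomial ℝ) (x : ℝ) :
    Matrix (BIdx n₁ n₂) (BIdx n₁ n₂) ℝ :=
  (expPartPoly c d).map (Polynomial.eval x)

/-- A residual part `C = Θ(C') ⊕ E`. -/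
def resPart {n₁ n₂ : ℕ} (C' : Matrix (Fin n₁) (Fin n₁) ℂ) (E : Matrix (Fin n₂) (Fin n₂) ℝ) :
    Matrix (BIdx n₁ n₂) (BIdx n₁ n₂) ℝ :=
  Matrix.of fun i j =>
    match i, j with
    | Sum.inl (j₁, a), Sum.inl (k₁, b) => theta (C' j₁ k₁) a b
    | Sum.inr j₁, Sum.inr k₁ => E j₁ k₁
    | _, _ => 0

/-- Compatibility of the residual blocks `(C', E)` with the exponential data `(c, d)`. -/
def Compatible {n₁ n₂ : ℕ} (c : Fin n₁ → Polynomial ℂ) (d : Fin n₂ → Polynomial ℝ)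
    (C' : Matrix (Fin n₁) (Fin n₁) ℂ) (E : Matrix (Fin n₂) (Fin n₂) ℝ) : Prop :=
  (∀ j k, c j ≠ c k → C' j k = 0) ∧ (∀ j k, d j ≠ d k → E j k = 0)

/-- degrees of all entries of the exponential data are `≤ q - 1`. -/
def DegLT (q : ℕ) {n₁ n₂ : ℕ} (c : Fin n₁ → Polynomial ℂ) (d : Fin n₂ → Polynomial ℝ) : Prop :=
  (∀ j, (c j).degree < (q : ℕ)) ∧ ∀ j, (d j).degree < (q : ℕ)

/-- The complex spectrum of a real square matrix. -/
def cSpec {ι : Type*} [Fintype ι] [DecidableEq ι] (C : Matrix ι ι ℝ) : Set ℂ :=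
  spectrum ℂ (C.map fun r : ℝ => (r : ℂ))

/-- Good spectrum: no two complex eigenvalues differ by a nonzero integer. -/
def GoodSpec {ι : Type*} [Fintype ι] [DecidableEq ι] (C : Matrix ι ι ℝ) : Prop :=
  ∀ μ ∈ cSpec C, ∀ ν ∈ cSpec C, ∀ k : ℤ, k ≠ 0 → μ - ν ≠ (k : ℂ)

/-- All complex eigenvalues have strictly negative real part. -/
def NegSpec {ι : Type*} [Fintype ι] [DecidableEq ι] (C : Matrix ι ι ℝ) : Prop :=
  ∀ μ ∈ cSpec C, μ.re < 0

/-- No dominant rotation: `ord (Re c_j) ≤ ord (Im c_j)` for every `j`. -/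
def NoDominantRotation {n₁ : ℕ} (c : Fin n₁ → Polynomial ℂ) : Prop :=
  ∀ j, ordP (reP (c j)) ≤ ordP (imP (c j))

/-- The unstability index `u(D)`. -/
def uIndex {n₁ n₂ : ℕ} (c : Fin n₁ → Polynomial ℂ) (d : Fin n₂ → Polynomial ℝ) : ℕ :=
  2 * Set.ncard {j : Fin n₁ | evPos (reP (c j))} + Set.ncard {j : Fin n₂ | evPos (d j)}

/-! ### Power series utilities -/

/-- Formal derivative of a power series. -/
def dX (f : PowerSeries ℝ) : PowerSeries ℝ :=
  PowerSeries.mk fun k => (k + 1 : ℝ) * PowerSeries.coeff (k + 1) f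

/-- A polynomial viewed as a power series. -/
def polyPS (p : Polynomial ℝ) : PowerSeries ℝ :=
  PowerSeries.mk fun k => p.coeff k

/-- Ramification `f(x) ↦ f(x^r)` on power series. -/
def ramify (r : ℕ) (f : PowerSeries ℝ) : PowerSeries ℝ :=
  PowerSeries.mk fun k => if r ∣ k then PowerSeries.coeff (k / r) f else 0

/-- Evaluation at `x` of the truncation to degree `≤ N` of a power series (the `N`-jet). -/
def jet (N : ℕ) (f : PowerSeries ℝ) (x : ℝ) : ℝ :=
  ∑ k ∈ Finset.range (N + 1), PowerSeries.coeff k f * x ^ k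

/-! ### Taylor series of smooth functions and substitution of formal curves -/

variable {ι : Type*} [Fintype ι] [DecidableEq ι]
variable {F : Type*} [NormedAddCommGroup F] [NormedSpace ℝ F]

/-- Partial derivative in the `x` direction. -/
def pdX (f : ℝ × (ι → ℝ) → F) : ℝ × (ι → ℝ) → F := fun p => fderiv ℝ f p (1, 0)

/-- Partial derivative in the `y i` direction. -/
def pdY (i : ι) (f : ℝ × (ι → ℝ) → F) : ℝ × (ι → ℝ) → F :=
  fun p => fderiv ℝ f p (0, Pi.single i 1)

/-- Iterated mixed partial derivative `∂_x^{α₀} ∂_y^{α} f`. -/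
def mDeriv (α₀ : ℕ) (α : ι → ℕ) (f : ℝ × (ι → ℝ) → F) : ℝ × (ι → ℝ) → F :=
  (pdX)^[α₀] ((Finset.univ : Finset ι).toList.foldr (fun i g => (pdY i)^[α i] g) f)

/-- The Taylor series at the origin of a smooth germ `f : ℝ × ℝ^ι → ℝ`,
as a multivariate formal power series in the variables `Option ι`
(`none` is the `x` variable, `some i` is `y i`). -/
def taylorSeries (f : ℝ × (ι → ℝ) → ℝ) : MvPowerSeries (Option ι) ℝ :=
  fun dd : Option ι →₀ ℕ =>
    (((dd none).factorial : ℝ) * ∏ i : ι, ((dd (some i)).factorial : ℝ))⁻¹ *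
      mDeriv (dd none) (fun i => dd (some i)) f (0, 0)

/-- Substitution of a tuple `c` of one-variable power series (each of positive order)
into a multivariate power series. -/
def substC (c : Option ι → PowerSeries ℝ) (g : MvPowerSeries (Option ι) ℝ) : PowerSeries ℝ :=
  PowerSeries.mk fun k =>
    ∑ dd ∈ Finset.Iic ((Finsupp.equivFunOnFinite).symm fun _ : Option ι => k),
      MvPowerSeries.coeff dd g * PowerSeries.coeff k (∏ v : Option ι, c v ^ dd v)

/-- The formal curve `(x, Γ(x))` as a tuple of one-variable power series. -/
def curveOf (Γ : ι → PowerSeries ℝ) : Option ι → PowerSeries ℝ :=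
  fun v => v.elim PowerSeries.X Γ

end

/-!
Along the curve `(x, Γ(x))` every monomial containing some `yᵢ` has order `≥ m`, so below
degree `m` the series `G∘Γ` agrees with `G(x, 0)`. On the other side, `F∘Γ` has no constant
term and `Γᵢ'` has order `≥ m - 1`, so `(F∘Γ) Γᵢ'` has order `≥ m`.
-/

open PowerSeries

section Substitution

variable {ι : Type*} [Fintype ι]

lemma prod_curveOf_pow_of_forall_some_eq_zero (Γ : ι → PowerSeries ℝ) {dd : Option ι →₀ ℕ}
    (hdd : ∀ j, dd (some j) = 0) :
    ∏ v, curveOf Γ v ^ dd v = X ^ dd none := by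
  rw [Fintype.prod_eq_single none]
  · rfl
  · rintro (_ | j) hv
    · exact absurd rfl hv
    · rw [hdd j, pow_zero]

lemma X_pow_dvd_prod_curveOf_pow_of_some_ne_zero {m : ℕ} {Γ : ι → PowerSeries ℝ}
    (hΓ : ∀ i, X ^ m ∣ Γ i) {dd : Option ι →₀ ℕ} {j : ι} (hj : dd (some j) ≠ 0) :
    X ^ m ∣ ∏ v, curveOf Γ v ^ dd v :=
  (dvd_pow (hΓ j) hj).trans (Finset.dvd_prod_of_mem (fun v => curveOf Γ v ^ dd v)
    (Finset.mem_univ (some j)))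

variable [DecidableEq ι]

lemma constantCoeff_substC (c : Option ι → PowerSeries ℝ) (g : MvPowerSeries (Option ι) ℝ) :
    coeff 0 (substC c g) = MvPowerSeries.constantCoeff g := by
  have hIic : Finset.Iic ((Finsupp.equivFunOnFinite).symm fun _ : Option ι => 0) = {0} := by
    ext dd
    simp [Finsupp.le_def, Finsupp.ext_iff]
  simp [substC, hIic]

lemma coeff_prod_curveOf_pow_of_lt {m k : ℕ} {Γ : ι → PowerSeries ℝ} (hΓ : ∀ i, X ^ m ∣ Γ i)
    (hk : k < m) (dd : Option ι →₀ ℕ) :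
    coeff k (∏ v, curveOf Γ v ^ dd v) = if dd = Finsupp.single none k then 1 else 0 := by
  by_cases hdd : ∀ j, dd (some j) = 0
  · have hsingle : k = dd none ↔ dd = Finsupp.single none k := by
      refine ⟨fun h => Finsupp.ext ?_, fun h => by simp [h]⟩
      rintro (_ | j)
      · simp [h]
      · simp [hdd j]
    rw [prod_curveOf_pow_of_forall_some_eq_zero Γ hdd, coeff_X_pow]
    exact if_congr hsingle rfl rfl
  · push Not at hdd
    obtain ⟨j, hj⟩ := hdd
    have hne : dd ≠ Finsupp.single none k := fun h => hj (by simp [h])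
    rw [if_neg hne]
    exact X_pow_dvd_iff.mp (X_pow_dvd_prod_curveOf_pow_of_some_ne_zero hΓ hj) k hk

lemma coeff_substC_curveOf_of_lt {m k : ℕ} {Γ : ι → PowerSeries ℝ} (hΓ : ∀ i, X ^ m ∣ Γ i)
    (hk : k < m) (g : MvPowerSeries (Option ι) ℝ) :
    coeff k (substC (curveOf Γ) g) = MvPowerSeries.coeff (Finsupp.single none k) g := by
  have hmem : Finsupp.single none k ∈
      Finset.Iic ((Finsupp.equivFunOnFinite).symm fun _ : Option ι => k) := by
    rw [Finset.mem_Iic]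
    rintro (_ | j) <;> simp
  simp only [substC, coeff_mk, coeff_prod_curveOf_pow_of_lt hΓ hk, mul_ite, mul_one, mul_zero,
    Finset.sum_ite_eq', if_pos hmem]

end Substitution

lemma X_pow_dvd_dX {m : ℕ} {f : PowerSeries ℝ} (hf : X ^ m ∣ f) : X ^ (m - 1) ∣ dX f := by
  refine X_pow_dvd_iff.mpr fun k hk => ?_
  rw [dX, coeff_mk, X_pow_dvd_iff.mp hf (k + 1) (by omega), mul_zero]

lemma X_pow_dvd_mul_dX {m : ℕ} {f g : PowerSeries ℝ} (hf : constantCoeff f = 0)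
    (hg : X ^ m ∣ g) : X ^ m ∣ f * dX g :=
  calc X ^ m ∣ X * X ^ (m - 1) := by rw [← pow_succ']; exact pow_dvd_pow X (by omega)
    _ ∣ f * dX g := mul_dvd_mul (X_dvd_iff.mpr hf) (X_pow_dvd_dX hg)

theorem order_estimate_along_invariant_curve_general
    (n m : ℕ)
    (F : MvPowerSeries (Option (Fin n)) ℝ) (G : Fin n → MvPowerSeries (Option (Fin n)) ℝ)
    (hF : MvPowerSeries.constantCoeff F = 0)
    (Γ : Fin n → PowerSeries ℝ)
    (hΓ : ∀ i, ∀ k < m, PowerSeries.coeff k (Γ i) = 0)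
    (hinv : ∀ i, substC (curveOf Γ) (G i) = substC (curveOf Γ) F * dX (Γ i)) :
    ∀ i, ∀ k < m,
      MvPowerSeries.coeff (Finsupp.single (none : Option (Fin n)) k) (G i) = 0 := by
  intro i k hk
  have hΓdvd : ∀ j, X ^ m ∣ Γ j := fun j => X_pow_dvd_iff.mpr (hΓ j)
  have hFΓ : constantCoeff (substC (curveOf Γ) F) = 0 := by
    rw [← coeff_zero_eq_constantCoeff_apply, constantCoeff_substC, hF]
  rw [← coeff_substC_curveOf_of_lt hΓdvd hk, hinv i]
  exact X_pow_dvd_iff.mp (X_pow_dvd_mul_dX hFΓ (hΓdvd i)) k hk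

/-- Remark 2.3: if a formal vector field with zero constant term leaves
invariant a formal curve `(x, Γ(x))` having contact of order `≥ m` with the `x`-axis, then its
`y`-components restricted to the `x`-axis have order `≥ m`. -/
theorem order_estimate_along_invariant_curve
    (n m : ℕ) (hn : 1 ≤ n) (hm : 1 ≤ m)
    (F : MvPowerSeries (Option (Fin n)) ℝ) (G : Fin n → MvPowerSeries (Option (Fin n)) ℝ)
    (hF : MvPowerSeries.constantCoeff F = 0)
    (hG : ∀ i, MvPowerSeries.constantCoeff (G i) = 0)
    (Γ : Fin n → PowerSeries ℝ)
    (hΓ : ∀ i, ∀ k < m, PowerSeries.coeff k (Γ i) = 0)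
    (hinv : ∀ i, substC (curveOf Γ) (G i) = substC (curveOf Γ) F * dX (Γ i)) :
    ∀ i, ∀ k < m,
      MvPowerSeries.coeff (Finsupp.single (none : Option (Fin n)) k) (G i) = 0 :=
  order_estimate_along_invariant_curve_general n m F G hF Γ hΓ hinv
end

section
/- Let q ≥ 1, β > 0 and t₀ ∈ ℝ. If a, b : (−∞,t₀] → (0,∞) are differentiable with a′(t) = a(t)^{q+1} and b′(t) = b(t)^{q+1} for all t ≤ t₀, and |a(t) − b(t)| = O(e^{βt}) as t → −∞, then a = b. -/
open scoped Topology
open Filter Set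

/-! For a positive solution of `x' = x ^ (q + 1)` the quantity `x⁻¹ ^ q + q t` is conserved, so
`a⁻¹ ^ q = A - q t` and `b⁻¹ ^ q = B - q t` for constants `A`, `B`. Both solutions are increasing,
hence bounded on `(-∞, t₀]`, so `B - A = (a ^ q - b ^ q) (A - q t) (B - q t) = O(e^{βt} t²)`,
which tends to `0` as `t → -∞`. Thus `A = B`, and then `a = b`. -/

open Asymptotics Polynomial Real

theorem Convex.inv_pow_add_mul_eq_of_hasDerivWithinAt_pow {s : Set ℝ} (hs : Convex ℝ s)
    {q : ℕ} {a : ℝ → ℝ} (hne : ∀ t ∈ s, a t ≠ 0)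
    (ha : ∀ t ∈ s, HasDerivWithinAt a (a t ^ (q + 1)) s t) {t u : ℝ} (ht : t ∈ s) (hu : u ∈ s) :
    (a t)⁻¹ ^ q + q * t = (a u)⁻¹ ^ q + q * u := by
  have hderiv : ∀ x ∈ s, HasDerivWithinAt (fun x => (a x)⁻¹ ^ q + q * x) 0 s x := by
    intro x hx
    refine ((((ha x hx).inv (hne x hx)).pow q).add
      ((hasDerivWithinAt_id x s).const_mul (q : ℝ))).congr_deriv ?_
    have := hne x hx
    rcases q with _ | q
    · simp
    · simp only [Pi.inv_apply, Nat.add_sub_cancel, inv_pow]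
      field_simp
      ring
  simpa [sub_eq_zero] using
    hs.norm_image_sub_le_of_norm_hasDerivWithin_le hderiv (fun _ _ => norm_zero.le) hu ht

theorem monotoneOn_of_forall_hasDerivWithinAt_nonneg {D : Set ℝ} (hD : Convex ℝ D)
    {f f' : ℝ → ℝ} (hf : ∀ x ∈ D, HasDerivWithinAt f (f' x) D x) (hf' : ∀ x ∈ D, 0 ≤ f' x) :
    MonotoneOn f D :=
  monotoneOn_of_hasDerivWithinAt_nonneg hD (fun x hx => (hf x hx).continuousWithinAt)
    (fun x hx => (hf x (interior_subset hx)).mono interior_subset)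
    (fun x hx => hf' x (interior_subset hx))

theorem tendsto_exp_mul_eval_atBot {β : ℝ} (hβ : 0 < β) (p : ℝ[X]) :
    Tendsto (fun t => exp (β * t) * p.eval t) atBot (𝓝 0) := by
  have h := (p.comp (C (-β⁻¹) * X)).tendsto_div_exp_atTop.comp
    (tendsto_neg_atBot_atTop.comp (tendsto_id.const_mul_atBot hβ))
  refine h.congr fun t => ?_
  simp only [Function.comp_apply, id, eval_comp, eval_mul, eval_C, eval_X, exp_neg, div_inv_eq_mul]
  rw [neg_mul_neg, inv_mul_cancel_left₀ hβ.ne', mul_comm]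

theorem isBigO_pow_sub_pow {α : Type*} {l : Filter α} {f g : α → ℝ} {M : ℝ}
    (hf : ∀ᶠ x in l, |f x| ≤ M) (hg : ∀ᶠ x in l, |g x| ≤ M) (n : ℕ) :
    (fun x => f x ^ n - g x ^ n) =O[l] fun x => f x - g x := by
  refine IsBigO.of_bound (n * M ^ (n - 1)) ?_
  filter_upwards [hf, hg] with x hfx hgx
  simp only [Real.norm_eq_abs]
  calc |f x ^ n - g x ^ n| ≤ |f x - g x| * n * max |f x| |g x| ^ (n - 1) :=
        abs_pow_sub_pow_le _ _ _
    _ ≤ |f x - g x| * n * M ^ (n - 1) := by gcongr; exact max_le hfx hgx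
    _ = n * M ^ (n - 1) * |f x - g x| := by ring

theorem mapsTo_Ioc_of_hasDerivWithinAt_pow {q : ℕ} {t₀ : ℝ} {a : ℝ → ℝ}
    (hpos : ∀ t ∈ Iic t₀, 0 < a t)
    (ha : ∀ t ∈ Iic t₀, HasDerivWithinAt a (a t ^ (q + 1)) (Iic t₀) t) :
    MapsTo a (Iic t₀) (Ioc 0 (a t₀)) := fun t ht =>
  ⟨hpos t ht, monotoneOn_of_forall_hasDerivWithinAt_nonneg (convex_Iic t₀) ha
    (fun s hs => (pow_pos (hpos s hs) _).le) ht self_mem_Iic ht⟩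

theorem inv_pow_eq_of_hasDerivWithinAt_pow {q : ℕ} {t₀ : ℝ} {a : ℝ → ℝ}
    (hpos : ∀ t ∈ Iic t₀, 0 < a t)
    (ha : ∀ t ∈ Iic t₀, HasDerivWithinAt a (a t ^ (q + 1)) (Iic t₀) t) {t : ℝ} (ht : t ∈ Iic t₀) :
    (a t)⁻¹ ^ q = (a t₀)⁻¹ ^ q + q * t₀ - q * t := by
  rw [← (convex_Iic t₀).inv_pow_add_mul_eq_of_hasDerivWithinAt_pow
    (fun s hs => (hpos s hs).ne') ha ht self_mem_Iic, add_sub_cancel_right]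

theorem eq_of_inv_pow_eq_sub_mul_of_isBigO_exp {q : ℕ} {β t₀ M A B : ℝ} (hβ : 0 < β)
    {a b : ℝ → ℝ} (haM : MapsTo a (Iic t₀) (Ioc 0 M)) (hbM : MapsTo b (Iic t₀) (Ioc 0 M))
    (hA : ∀ t ∈ Iic t₀, (a t)⁻¹ ^ q = A - q * t) (hB : ∀ t ∈ Iic t₀, (b t)⁻¹ ^ q = B - q * t)
    (hclose : (fun t => a t - b t) =O[atBot] fun t => exp (β * t)) :
    A = B := by
  have hbound : ∀ {c : ℝ → ℝ}, MapsTo c (Iic t₀) (Ioc 0 M) → ∀ᶠ t in atBot, |c t| ≤ M :=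
    fun hc => (eventually_le_atBot t₀).mono fun t ht => by
      rw [abs_of_pos (hc ht).1]; exact (hc ht).2
  have hpoly : Tendsto (fun t => exp (β * t) * ((A - q * t) * (B - q * t))) atBot (𝓝 0) := by
    have h := tendsto_exp_mul_eval_atBot hβ ((C A - C (q : ℝ) * X) * (C B - C (q : ℝ) * X))
    simpa only [eval_mul, eval_sub, eval_C, eval_X] using h
  have hlim : Tendsto (fun t => (a t ^ q - b t ^ q) * ((A - q * t) * (B - q * t))) atBot (𝓝 0) :=
    (((isBigO_pow_sub_pow (hbound haM) (hbound hbM) q).trans hclose).mul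
      (isBigO_refl _ _)).trans_tendsto hpoly
  have hconst : ∀ᶠ t in atBot, (a t ^ q - b t ^ q) * ((A - q * t) * (B - q * t)) = B - A := by
    filter_upwards [eventually_le_atBot t₀] with t ht
    have ha0 := (haM ht).1.ne'
    have hb0 := (hbM ht).1.ne'
    calc _ = (a t ^ q - b t ^ q) * ((a t ^ q)⁻¹ * (b t ^ q)⁻¹) := by
          rw [← inv_pow, ← inv_pow, hA t ht, hB t ht]
      _ = (b t ^ q)⁻¹ - (a t ^ q)⁻¹ := by field_simp
      _ = B - A := by rw [← inv_pow, ← inv_pow, hA t ht, hB t ht]; ring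
  exact (sub_eq_zero.1 (tendsto_const_nhds_iff.1 (hlim.congr' hconst))).symm

/-- uniqueness step in Proposition 3.3: two positive solutions of
`x′ = x^{q+1}` on `(−∞, t₀]` which are exponentially close as `t → −∞` coincide. -/
theorem exponentially_close_solutions_coincide
    (q : ℕ) (hq : 1 ≤ q) (β t₀ : ℝ) (hβ : 0 < β)
    (a b : ℝ → ℝ)
    (hapos : ∀ t ∈ Iic t₀, 0 < a t) (hbpos : ∀ t ∈ Iic t₀, 0 < b t)
    (ha : ∀ t ∈ Iic t₀, HasDerivWithinAt a (a t ^ (q + 1)) (Iic t₀) t)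
    (hb : ∀ t ∈ Iic t₀, HasDerivWithinAt b (b t ^ (q + 1)) (Iic t₀) t)
    (hclose : (fun t => a t - b t) =O[atBot] fun t => Real.exp (β * t)) :
    ∀ t ∈ Iic t₀, a t = b t := by
  have hconst : (a t₀)⁻¹ ^ q + q * t₀ = (b t₀)⁻¹ ^ q + q * t₀ :=
    eq_of_inv_pow_eq_sub_mul_of_isBigO_exp hβ
      ((mapsTo_Ioc_of_hasDerivWithinAt_pow hapos ha).mono_right
        (Ioc_subset_Ioc_right (le_max_left _ (b t₀))))
      ((mapsTo_Ioc_of_hasDerivWithinAt_pow hbpos hb).mono_right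
        (Ioc_subset_Ioc_right (le_max_right (a t₀) _)))
      (fun _ => inv_pow_eq_of_hasDerivWithinAt_pow hapos ha)
      (fun _ => inv_pow_eq_of_hasDerivWithinAt_pow hbpos hb) hclose
  intro t ht
  have hinv : (a t)⁻¹ ^ q = (b t)⁻¹ ^ q := by
    rw [inv_pow_eq_of_hasDerivWithinAt_pow hapos ha ht,
      inv_pow_eq_of_hasDerivWithinAt_pow hbpos hb ht, hconst]
  exact inv_injective <| (pow_left_inj₀ (inv_nonneg.2 (hapos t ht).le)
    (inv_nonneg.2 (hbpos t ht).le) (by omega)).1 hinv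
end

section
/- Let q ≥ 1, N ≥ 0, and n = m + p with m ≥ 0, p ≥ 1. Let D_z ∈ M_m(ℝ[x]) and D_w ∈ M_p(ℝ[x]) be polynomial matrices of degree ≤ q−1 with D_z(0) = 0 and D_w(0) invertible, and let C_z ∈ M_m(ℝ), C_w ∈ M_p(ℝ). Let V_z : W → ℝ^m and V_w : W → ℝ^p be continuous on a neighborhood W of 0 ∈ ℝ^{1+n}. Suppose h : W₀ → ℝ^p is of class C^{n(q+1+N)+1} on a neighborhood W₀ of 0 ∈ ℝ^{1+m} and satisfies, for all (x,z) ∈ W₀ (with (x,z,h(x,z)) ∈ W): (D_w(x)+x^q·C_w)·h(x,z) + x^{q+1+N}·V_w(x,z,h(x,z)) = x^{q+1}·∂_x h(x,z) + (∂_z h(x,z))·[ (D_z(x)+x^q·C_z)·z + x^{q+1+N}·V_z(x,z,h(x,z)) ]. Then there exists a map g of class C^{(n−1)(q+1+N)+1} on a neighborhood of 0 in ℝ^{1+m} such that h(x,z) = x^{q+1+N}·g(x,z) there. -/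
open scoped Topology
open Filter Set

/-!
Write `r = q + 1 + N`. If `h = x^ℓ • g` on a ball with `ℓ < r` and `g` of class `C¹`, dividing
the invariance equation by `x^ℓ` gives
`A(x) g + x^(r-ℓ) V_w = ℓ x^q g + Dg (x^(q+1), B(x) z + x^r V_z)` for `x ≠ 0`,
with `A = D_w + x^q C_w` and `B = D_z + x^q C_z`. Both sides are continuous, so the identity holds
at `x = 0` too, where (as `q ≥ 1` and `D_z(0) = 0`) it reads `D_w(0) g(0, z) = 0`. Hence `g`
vanishes on `x = 0` and Hadamard's formula `g(x, z) = x ∫₀¹ ∂ₓg(tx, z) dt` divides it by `x` at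
the cost of one derivative. After `r` steps, `(m + p) r + 1` derivatives have become
`(m + p - 1) r + 1`.
-/

universe u

section ParametricIntegral

open Metric

lemma exists_closedBall_bound_of_continuousOn {Y G : Type*} [PseudoMetricSpace Y]
    [ProperSpace Y] [SeminormedAddGroup G] {φ : ℝ × Y → G} {O : Set (ℝ × Y)} {U : Set Y}
    {a b : ℝ} (hφ : ContinuousOn φ O) (hU : IsOpen U) (hUO : uIcc a b ×ˢ U ⊆ O) {y₀ : Y}
    (hy₀ : y₀ ∈ U) :
    ∃ δ > 0, closedBall y₀ δ ⊆ U ∧ ∃ M, ∀ t ∈ uIcc a b, ∀ y ∈ closedBall y₀ δ, ‖φ (t, y)‖ ≤ M := by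
  obtain ⟨ε, hε, hεU⟩ := Metric.isOpen_iff.1 hU y₀ hy₀
  have hδU : closedBall y₀ (ε / 2) ⊆ U := (closedBall_subset_ball (half_lt_self hε)).trans hεU
  obtain ⟨M, hM⟩ := IsCompact.exists_bound_of_continuousOn
    (isCompact_uIcc.prod (isCompact_closedBall y₀ (ε / 2)))
    (hφ.mono ((prod_mono le_rfl hδU).trans hUO))
  exact ⟨ε / 2, half_pos hε, hδU, M, fun t ht y hy => hM (t, y) ⟨ht, hy⟩⟩

variable {Y G : Type u} [NormedAddCommGroup Y] [ProperSpace Y]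
  [NormedAddCommGroup G] [NormedSpace ℝ G]
  {φ : ℝ × Y → G} {O : Set (ℝ × Y)} {U : Set Y} {a b : ℝ}

lemma continuousOn_intervalIntegral_of_continuousOn (hφ : ContinuousOn φ O) (hO : IsOpen O)
    (hU : IsOpen U) (hUO : uIcc a b ×ˢ U ⊆ O) :
    ContinuousOn (fun y => ∫ t in a..b, φ (t, y)) U := by
  intro y₀ hy₀
  obtain ⟨δ, hδ, hδU, M, hM⟩ := exists_closedBall_bound_of_continuousOn hφ hU hUO hy₀
  have hslice : ∀ y ∈ U, ContinuousOn (fun t => φ (t, y)) (uIcc a b) := fun y hy =>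
    hφ.comp (Continuous.continuousOn (by fun_prop)) fun t ht => hUO ⟨ht, hy⟩
  refine ContinuousAt.continuousWithinAt
    (intervalIntegral.continuousAt_of_dominated_interval (bound := fun _ => M) ?_ ?_
      intervalIntegrable_const ?_)
  · filter_upwards [closedBall_mem_nhds y₀ hδ] with y hy
    exact ((hslice y (hδU hy)).mono uIoc_subset_uIcc).aestronglyMeasurable measurableSet_uIoc
  · filter_upwards [closedBall_mem_nhds y₀ hδ] with y hy
    exact Eventually.of_forall fun t ht => hM t (uIoc_subset_uIcc ht) y hy
  · refine Eventually.of_forall fun t ht => ?_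
    exact (hφ.continuousAt (hO.mem_nhds (hUO ⟨uIoc_subset_uIcc ht, hy₀⟩))).comp
      (Continuous.continuousAt (by fun_prop))

variable [NormedSpace ℝ Y]

lemma hasFDerivAt_intervalIntegral_of_contDiffOn (hφ : ContDiffOn ℝ 1 φ O) (hO : IsOpen O)
    (hU : IsOpen U) (hUO : uIcc a b ×ˢ U ⊆ O) {y₀ : Y} (hy₀ : y₀ ∈ U) :
    HasFDerivAt (fun y => ∫ t in a..b, φ (t, y))
      (∫ t in a..b, fderiv ℝ φ (t, y₀) ∘L ContinuousLinearMap.inr ℝ ℝ Y) y₀ := by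
  have hφ' : ContinuousOn (fun p => fderiv ℝ φ p ∘L ContinuousLinearMap.inr ℝ ℝ Y) O :=
    (hφ.continuousOn_fderiv_of_isOpen hO le_rfl).clm_comp continuousOn_const
  obtain ⟨δ, hδ, hδU, M, hM⟩ := exists_closedBall_bound_of_continuousOn hφ' hU hUO hy₀
  have hslice : ∀ {H : Type u} [TopologicalSpace H] {ψ : ℝ × Y → H}, ContinuousOn ψ O → ∀ y ∈ U,
      ContinuousOn (fun t => ψ (t, y)) (uIcc a b) := fun hψ y hy =>
    hψ.comp (Continuous.continuousOn (by fun_prop)) fun t ht => hUO ⟨ht, hy⟩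
  refine intervalIntegral.hasFDerivAt_integral_of_dominated_of_fderiv_le (bound := fun _ => M)
    (F' := fun y t => fderiv ℝ φ (t, y) ∘L ContinuousLinearMap.inr ℝ ℝ Y) (ball_mem_nhds y₀ hδ)
    ?_ ((hslice hφ.continuousOn y₀ hy₀).intervalIntegrable)
    (((hslice hφ' y₀ hy₀).mono uIoc_subset_uIcc).aestronglyMeasurable measurableSet_uIoc)
    ?_ intervalIntegrable_const ?_
  · filter_upwards [closedBall_mem_nhds y₀ hδ] with y hy
    exact ((hslice hφ.continuousOn y (hδU hy)).mono uIoc_subset_uIcc).aestronglyMeasurable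
      measurableSet_uIoc
  · exact Eventually.of_forall fun t ht y hy =>
      hM t (uIoc_subset_uIcc ht) y (ball_subset_closedBall hy)
  · refine Eventually.of_forall fun t ht y hy => ?_
    have hty : (t, y) ∈ O := hUO ⟨uIoc_subset_uIcc ht, hδU (ball_subset_closedBall hy)⟩
    exact ((hφ.differentiableOn one_ne_zero _ hty).differentiableAt
      (hO.mem_nhds hty)).hasFDerivAt.comp y (hasFDerivAt_prodMk_right t y)

variable [CompleteSpace G]

lemma contDiffOn_intervalIntegral_of_contDiffOn {n : ℕ} (hφ : ContDiffOn ℝ n φ O)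
    (hO : IsOpen O) (hU : IsOpen U) (hUO : uIcc a b ×ˢ U ⊆ O) :
    ContDiffOn ℝ n (fun y => ∫ t in a..b, φ (t, y)) U := by
  induction n generalizing G with
  | zero =>
    rw [Nat.cast_zero, contDiffOn_zero] at hφ ⊢
    exact continuousOn_intervalIntegral_of_continuousOn hφ hO hU hUO
  | succ n ih =>
    have hφ1 : ContDiffOn ℝ 1 φ O := hφ.of_le (by exact_mod_cast Nat.le_add_left 1 n)
    have hderiv := fun y (hy : y ∈ U) =>
      hasFDerivAt_intervalIntegral_of_contDiffOn hφ1 hO hU hUO hy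
    rw [Nat.cast_succ, contDiffOn_succ_iff_fderiv_of_isOpen hU]
    refine ⟨fun y hy => (hderiv y hy).differentiableAt.differentiableWithinAt, by simp, ?_⟩
    refine (ih ((hφ.fderiv_of_isOpen hO (by simp)).clm_comp contDiffOn_const)).congr
      fun y hy => (hderiv y hy).fderiv

end ParametricIntegral

section Division

variable {E F : Type u} [NormedAddCommGroup E] [NormedSpace ℝ E] [ProperSpace E]
  [NormedAddCommGroup F] [NormedSpace ℝ F] [CompleteSpace F] {V : Set (ℝ × E)}

lemma ContDiffOn.exists_eq_fst_smul {k : ℕ} {f : ℝ × E → F} (hf : ContDiffOn ℝ (k + 1 : ℕ) f V)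
    (hVo : IsOpen V) (hV : ∀ y ∈ V, ∀ t ∈ Icc (0 : ℝ) 1, (t * y.1, y.2) ∈ V)
    (hf0 : ∀ y ∈ V, y.1 = 0 → f y = 0) :
    ∃ g : ℝ × E → F, ContDiffOn ℝ k g V ∧ ∀ y ∈ V, f y = y.1 • g y := by
  set σ : ℝ × (ℝ × E) → ℝ × E := fun p => (p.1 * p.2.1, p.2.2)
  set fx : ℝ × E → F := fun y => fderiv ℝ f y (1, 0)
  have hσ : ContDiff ℝ k σ := by fun_prop
  have hUO : uIcc (0 : ℝ) 1 ×ˢ V ⊆ σ ⁻¹' V := fun p hp =>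
    hV p.2 hp.2 p.1 (uIcc_of_le (zero_le_one' ℝ) ▸ hp.1)
  have hfx : ContDiffOn ℝ k fx V :=
    (hf.fderiv_of_isOpen hVo (by push_cast; exact le_rfl)).clm_apply contDiffOn_const
  refine ⟨fun y => ∫ t in (0 : ℝ)..1, fx (σ (t, y)),
    contDiffOn_intervalIntegral_of_contDiffOn (hfx.comp hσ.contDiffOn (mapsTo_preimage σ V))
      (hVo.preimage hσ.continuous) hVo hUO, fun y hy => ?_⟩
  have hseg : ∀ t ∈ uIcc (0 : ℝ) 1, σ (t, y) ∈ V := fun t ht => hUO ⟨ht, hy⟩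
  have hderiv : ∀ t ∈ uIcc (0 : ℝ) 1,
      HasDerivAt (fun t => f (σ (t, y))) (y.1 • fx (σ (t, y))) t := by
    intro t ht
    have hfd := ((hf.differentiableOn (by simp) _ (hseg t ht)).differentiableAt
      (hVo.mem_nhds (hseg t ht))).hasFDerivAt
    have hline : HasDerivAt (fun t : ℝ => σ (t, y)) (y.1 • ((1 : ℝ), (0 : E))) t := by
      simpa using ((hasDerivAt_id t).mul_const y.1).prodMk (hasDerivAt_const t y.2)
    exact map_smul (fderiv ℝ f _) y.1 ((1 : ℝ), (0 : E)) ▸ hfd.comp_hasDerivAt t hline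
  have hcont : ContinuousOn (fun t => y.1 • fx (σ (t, y))) (uIcc 0 1) :=
    (hfx.continuousOn.comp (Continuous.continuousOn (by fun_prop)) hseg).const_smul y.1
  have hftc := intervalIntegral.integral_eq_sub_of_hasDerivAt hderiv hcont.intervalIntegrable
  rw [intervalIntegral.integral_smul, hf0 _ (hseg 0 left_mem_uIcc) (zero_mul y.1), sub_zero]
    at hftc
  simpa [σ] using hftc.symm

lemma ContDiffOn.exists_eq_pow_fst_smul {n r : ℕ} {f : ℝ × E → F} (hf : ContDiffOn ℝ n f V)
    (hrn : r ≤ n) (hVo : IsOpen V) (hV : ∀ y ∈ V, ∀ t ∈ Icc (0 : ℝ) 1, (t * y.1, y.2) ∈ V)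
    (hvanish : ∀ ℓ < r, ∀ g : ℝ × E → F, ContDiffOn ℝ 1 g V →
      (∀ y ∈ V, f y = y.1 ^ ℓ • g y) → ∀ y ∈ V, y.1 = 0 → g y = 0) :
    ∃ g : ℝ × E → F, ContDiffOn ℝ (n - r : ℕ) g V ∧ ∀ y ∈ V, f y = y.1 ^ r • g y := by
  induction r with
  | zero => exact ⟨f, by simpa using hf, fun y _ => by simp⟩
  | succ r ih =>
    obtain ⟨g, hg, hfg⟩ := ih (by omega) fun ℓ hℓ => hvanish ℓ (by omega)
    rw [show n - r = n - (r + 1) + 1 by omega] at hg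
    have hg0 := hvanish r (by omega) g (hg.of_le (by exact_mod_cast Nat.le_add_left 1 _)) hfg
    obtain ⟨g', hg', hgg'⟩ := hg.exists_eq_fst_smul hVo hV hg0
    exact ⟨g', hg', fun y hy => by rw [hfg y hy, hgg' y hy, smul_smul, pow_succ]⟩

end Division

lemma mul_fst_mem_ball {E : Type*} [SeminormedAddCommGroup E] {ε : ℝ} {y : ℝ × E}
    (hy : y ∈ Metric.ball 0 ε) {t : ℝ} (ht : t ∈ Icc (0 : ℝ) 1) :
    (t * y.1, y.2) ∈ Metric.ball (0 : ℝ × E) ε := by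
  rw [mem_ball_zero_iff, Prod.norm_def] at hy ⊢
  refine lt_of_le_of_lt (max_le_max_right _ ?_) hy
  rw [norm_mul, Real.norm_of_nonneg ht.1]
  exact mul_le_of_le_one_left (norm_nonneg _) ht.2

lemma eqOn_of_forall_fst_ne_zero {X Z : Type*} [TopologicalSpace X] [TopologicalSpace Z]
    [T2Space Z] {f g : ℝ × X → Z} {V : Set (ℝ × X)} (hV : IsOpen V) (hf : ContinuousOn f V)
    (hg : ContinuousOn g V) (hfg : ∀ y ∈ V, y.1 ≠ 0 → f y = g y) : EqOn f g V :=
  EqOn.of_subset_closure (fun y hy => hfg y hy.1 hy.2) hf hg inter_subset_left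
    (((dense_compl_singleton (0 : ℝ)).preimage isOpenMap_fst).open_subset_closure_inter hV)

lemma fderiv_pow_fst_smul_apply {E F : Type*} [NormedAddCommGroup E] [NormedSpace ℝ E]
    [NormedAddCommGroup F] [NormedSpace ℝ F] {g : ℝ × E → F} {y : ℝ × E}
    (hg : DifferentiableAt ℝ g y) (ℓ : ℕ) (u : ℝ) (v : E) :
    fderiv ℝ (fun y => y.1 ^ ℓ • g y) y (y.1 * u, v)
      = y.1 ^ ℓ • (fderiv ℝ g y (y.1 * u, v) + ((ℓ : ℝ) * u) • g y) := by
  have hpow : HasFDerivAt (fun y : ℝ × E => y.1 ^ ℓ)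
      (((ℓ : ℝ) * y.1 ^ (ℓ - 1)) • ContinuousLinearMap.fst ℝ ℝ E) y :=
    (hasDerivAt_pow ℓ y.1).comp_hasFDerivAt y hasFDerivAt_fst
  rw [(hpow.fun_smul hg.hasFDerivAt).fderiv]
  simp only [add_apply, smul_apply, ContinuousLinearMap.smulRight_apply, smul_add, smul_smul,
    ContinuousLinearMap.coe_fst', smul_eq_mul]
  congr 2
  rcases ℓ with _ | ℓ
  · simp
  · push_cast; ring

section Invariance

variable {m p q r : ℕ} {A : ℝ → Matrix (Fin p) (Fin p) ℝ} {B : ℝ → Matrix (Fin m) (Fin m) ℝ}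
  {W : Set (ℝ × (Fin m → ℝ) × (Fin p → ℝ))}
  {Vz : ℝ × (Fin m → ℝ) × (Fin p → ℝ) → Fin m → ℝ}
  {Vw : ℝ × (Fin m → ℝ) × (Fin p → ℝ) → Fin p → ℝ}
  {V : Set (ℝ × (Fin m → ℝ))} {h : ℝ × (Fin m → ℝ) → Fin p → ℝ}

lemma eq_zero_of_fst_eq_zero_of_invariant (hq : 1 ≤ q) (hA : Continuous A)
    (hA0 : IsUnit (A 0).det) (hB : Continuous B) (hB0 : B 0 = 0) (hVz : ContinuousOn Vz W)
    (hVw : ContinuousOn Vw W) (hVo : IsOpen V) (hgraph : ∀ y ∈ V, (y.1, y.2, h y) ∈ W)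
    (hinvar : ∀ y ∈ V, (A y.1).mulVec (h y) + y.1 ^ r • Vw (y.1, y.2, h y)
      = fderiv ℝ h y (y.1 ^ (q + 1), (B y.1).mulVec y.2 + y.1 ^ r • Vz (y.1, y.2, h y)))
    {ℓ : ℕ} (hℓ : ℓ < r) {g : ℝ × (Fin m → ℝ) → Fin p → ℝ} (hg : ContDiffOn ℝ 1 g V)
    (hhg : ∀ y ∈ V, h y = y.1 ^ ℓ • g y) :
    ∀ y ∈ V, y.1 = 0 → g y = 0 := by
  have hgc := hg.continuousOn
  have hh : ContinuousOn h V := ((continuousOn_fst.pow ℓ).smul hgc).congr hhg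
  have hgraphc : ContinuousOn (fun y => (y.1, y.2, h y)) V := by fun_prop
  have hvz : ContinuousOn (fun y => Vz (y.1, y.2, h y)) V := hVz.comp hgraphc hgraph
  have hvw : ContinuousOn (fun y => Vw (y.1, y.2, h y)) V := hVw.comp hgraphc hgraph
  have hmulVec : ∀ {k : ℕ} {M : ℝ → Matrix (Fin k) (Fin k) ℝ} {v : ℝ × (Fin m → ℝ) → Fin k → ℝ},
      Continuous M → ContinuousOn v V → ContinuousOn (fun y => (M y.1).mulVec (v y)) V :=
    fun hM hv => (continuous_fst.matrix_mulVec continuous_snd).comp_continuousOn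
      ((hM.comp_continuousOn continuousOn_fst).prodMk hv)
  have hAg := hmulVec hA hgc
  have hBz := hmulVec hB continuousOn_snd
  have hDg := hg.continuousOn_fderiv_of_isOpen hVo le_rfl
  have hdiv : EqOn
      (fun y => (A y.1).mulVec (g y) + y.1 ^ (r - ℓ) • Vw (y.1, y.2, h y))
      (fun y => ((ℓ : ℝ) * y.1 ^ q) • g y
        + fderiv ℝ g y (y.1 ^ (q + 1), (B y.1).mulVec y.2 + y.1 ^ r • Vz (y.1, y.2, h y))) V := by
    refine eqOn_of_forall_fst_ne_zero hVo (hAg.add ((continuousOn_fst.pow _).smul hvw))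
      (((continuousOn_const.mul (continuousOn_fst.pow q)).smul hgc).add (hDg.clm_apply
        ((continuousOn_fst.pow _).prodMk (hBz.add ((continuousOn_fst.pow r).smul hvz)))))
      fun y hy hy0 => ?_
    have hgd : DifferentiableAt ℝ g y :=
      (hg.differentiableOn one_ne_zero y hy).differentiableAt (hVo.mem_nhds hy)
    have hfd : fderiv ℝ h y = fderiv ℝ (fun y => y.1 ^ ℓ • g y) y :=
      Filter.EventuallyEq.fderiv_eq (eventually_of_mem (hVo.mem_nhds hy) hhg)
    refine smul_right_injective _ (pow_ne_zero ℓ hy0) ?_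
    calc y.1 ^ ℓ • ((A y.1).mulVec (g y) + y.1 ^ (r - ℓ) • Vw (y.1, y.2, h y))
        = (A y.1).mulVec (h y) + y.1 ^ r • Vw (y.1, y.2, h y) := by
          rw [smul_add, smul_smul, ← pow_add, Nat.add_sub_cancel' hℓ.le, ← Matrix.mulVec_smul,
            ← hhg y hy]
      _ = _ := hinvar y hy
      _ = _ := by rw [hfd, pow_succ' y.1 q, fderiv_pow_fst_smul_apply hgd, add_comm]
  intro y hy hy0
  have hy := hdiv hy
  simp only [hy0, hB0, zero_pow (by omega : r - ℓ ≠ 0), zero_pow (by omega : q ≠ 0),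
    zero_pow (by omega : r ≠ 0), zero_pow (by omega : q + 1 ≠ 0), zero_smul, mul_zero, add_zero,
    Matrix.zero_mulVec, Prod.mk_zero_zero, map_zero] at hy
  exact Matrix.mulVec_injective_iff_isUnit.2 ((Matrix.isUnit_iff_isUnit_det _).2 hA0)
    (hy.trans (Matrix.mulVec_zero _).symm)

end Invariance

lemma continuous_map_eval_add_pow_smul {n : Type*} (D : Matrix n n (Polynomial ℝ))
    (C : Matrix n n ℝ) (q : ℕ) : Continuous fun x : ℝ => D.map (Polynomial.eval x) + x ^ q • C :=
  (continuous_matrix fun i j => (D i j).continuous).add ((continuous_pow q).smul continuous_const)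

theorem center_manifold_graph_divisibility_general
    (m p q N : ℕ) (hq : 1 ≤ q) (hp : 1 ≤ p)
    (Dz : Matrix (Fin m) (Fin m) (Polynomial ℝ)) (Dw : Matrix (Fin p) (Fin p) (Polynomial ℝ))
    (hDz0 : ∀ i j, (Dz i j).eval 0 = 0)
    (hDw0 : IsUnit (Dw.map (Polynomial.eval (0 : ℝ))).det)
    (Cz : Matrix (Fin m) (Fin m) ℝ) (Cw : Matrix (Fin p) (Fin p) ℝ)
    (W : Set (ℝ × (Fin m → ℝ) × (Fin p → ℝ)))
    (Vz : ℝ × (Fin m → ℝ) × (Fin p → ℝ) → Fin m → ℝ)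
    (Vw : ℝ × (Fin m → ℝ) × (Fin p → ℝ) → Fin p → ℝ)
    (hVz : ContinuousOn Vz W) (hVw : ContinuousOn Vw W)
    (W₀ : Set (ℝ × (Fin m → ℝ))) (hW₀o : IsOpen W₀) (hW₀ : (0 : ℝ × (Fin m → ℝ)) ∈ W₀)
    (h : ℝ × (Fin m → ℝ) → Fin p → ℝ)
    (hh : ContDiffOn ℝ ((m + p) * (q + 1 + N) + 1 : ℕ) h W₀)
    (hgraph : ∀ z ∈ W₀, (z.1, z.2, h z) ∈ W)
    (hinvar : ∀ z ∈ W₀,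
      Matrix.mulVec (Dw.map (Polynomial.eval z.1) + z.1 ^ q • Cw) (h z)
          + z.1 ^ (q + 1 + N) • Vw (z.1, z.2, h z)
        = fderiv ℝ h z
            (z.1 ^ (q + 1),
              Matrix.mulVec (Dz.map (Polynomial.eval z.1) + z.1 ^ q • Cz) z.2
                + z.1 ^ (q + 1 + N) • Vz (z.1, z.2, h z))) :
    ∃ W₁ : Set (ℝ × (Fin m → ℝ)), W₁ ∈ 𝓝 (0 : ℝ × (Fin m → ℝ)) ∧
      ∃ g : ℝ × (Fin m → ℝ) → Fin p → ℝ,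
        ContDiffOn ℝ ((m + p - 1) * (q + 1 + N) + 1 : ℕ) g W₁ ∧
        ∀ z ∈ W₁, h z = z.1 ^ (q + 1 + N) • g z := by
  obtain ⟨ε, hε, hball⟩ := Metric.isOpen_iff.1 hW₀o 0 hW₀
  have hq0 : q ≠ 0 := by omega
  have hB0 : Dz.map (Polynomial.eval 0) + (0 : ℝ) ^ q • Cz = 0 := by
    ext i j
    simp [hDz0, hq0]
  have hA0 : IsUnit (Dw.map (Polynomial.eval 0) + (0 : ℝ) ^ q • Cw).det := by simpa [hq0] using hDw0
  obtain ⟨g, hg, hhg⟩ := (hh.mono hball).exists_eq_pow_fst_smul (r := q + 1 + N) (by nlinarith)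
    Metric.isOpen_ball (fun y hy t ht => mul_fst_mem_ball hy ht)
    fun ℓ hℓ g hg hhg => eq_zero_of_fst_eq_zero_of_invariant hq
      (continuous_map_eval_add_pow_smul Dw Cw q) hA0 (continuous_map_eval_add_pow_smul Dz Cz q)
      hB0 hVz hVw Metric.isOpen_ball (fun y hy => hgraph y (hball hy))
      (fun y hy => hinvar y (hball hy)) hℓ hg hhg
  obtain ⟨k, hk⟩ : ∃ k, m + p = k + 1 := ⟨m + p - 1, by omega⟩
  refine ⟨_, Metric.ball_mem_nhds 0 hε, g, ?_, hhg⟩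
  rwa [show (m + p) * (q + 1 + N) + 1 - (q + 1 + N) = (m + p - 1) * (q + 1 + N) + 1 by
    rw [hk, Nat.add_sub_cancel, add_mul]; omega] at hg

/-- divisibility claim in the proof of Lemma 3.5: the graph map of an
invariant (center) manifold of a vector field in (TRS)-form is divisible by `x^{q+1+N}`, with a
quotient of class `C^{(n−1)(q+1+N)+1}` where `n = m + p`. -/
theorem center_manifold_graph_divisibility
    (m p q N : ℕ) (hq : 1 ≤ q) (hp : 1 ≤ p)
    (Dz : Matrix (Fin m) (Fin m) (Polynomial ℝ)) (Dw : Matrix (Fin p) (Fin p) (Polynomial ℝ))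
    (hDzdeg : ∀ i j, (Dz i j).degree < (q : ℕ)) (hDwdeg : ∀ i j, (Dw i j).degree < (q : ℕ))
    (hDz0 : ∀ i j, (Dz i j).eval 0 = 0)
    (hDw0 : IsUnit (Dw.map (Polynomial.eval (0 : ℝ))).det)
    (Cz : Matrix (Fin m) (Fin m) ℝ) (Cw : Matrix (Fin p) (Fin p) ℝ)
    (W : Set (ℝ × (Fin m → ℝ) × (Fin p → ℝ)))
    (hW : W ∈ 𝓝 (0 : ℝ × (Fin m → ℝ) × (Fin p → ℝ)))
    (Vz : ℝ × (Fin m → ℝ) × (Fin p → ℝ) → Fin m → ℝ)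
    (Vw : ℝ × (Fin m → ℝ) × (Fin p → ℝ) → Fin p → ℝ)
    (hVz : ContinuousOn Vz W) (hVw : ContinuousOn Vw W)
    (W₀ : Set (ℝ × (Fin m → ℝ))) (hW₀o : IsOpen W₀) (hW₀ : (0 : ℝ × (Fin m → ℝ)) ∈ W₀)
    (h : ℝ × (Fin m → ℝ) → Fin p → ℝ)
    (hh : ContDiffOn ℝ ((m + p) * (q + 1 + N) + 1 : ℕ) h W₀)
    (hgraph : ∀ z ∈ W₀, (z.1, z.2, h z) ∈ W)
    (hinvar : ∀ z ∈ W₀,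
      Matrix.mulVec (Dw.map (Polynomial.eval z.1) + z.1 ^ q • Cw) (h z)
          + z.1 ^ (q + 1 + N) • Vw (z.1, z.2, h z)
        = fderiv ℝ h z
            (z.1 ^ (q + 1),
              Matrix.mulVec (Dz.map (Polynomial.eval z.1) + z.1 ^ q • Cz) z.2
                + z.1 ^ (q + 1 + N) • Vz (z.1, z.2, h z))) :
    ∃ W₁ : Set (ℝ × (Fin m → ℝ)), W₁ ∈ 𝓝 (0 : ℝ × (Fin m → ℝ)) ∧
      ∃ g : ℝ × (Fin m → ℝ) → Fin p → ℝ,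
        ContDiffOn ℝ ((m + p - 1) * (q + 1 + N) + 1 : ℕ) g W₁ ∧
        ∀ z ∈ W₁, h z = z.1 ^ (q + 1 + N) • g z :=
  center_manifold_graph_divisibility_general m p q N hq hp Dz Dw hDz0 hDw0 Cz Cw W Vz Vw hVz hVw W₀
    hW₀o hW₀ h hh hgraph hinvar
end
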